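/- arXiv:1904.09010 — 3 statements merged into one kernel-verified Lean document; each statement's English description precedes it below -/
import Mathlib

section
/- Let a > 0, b > 0, T > 0, and let h : [0, T) → ℝ be a differentiable function with h'(t) ≤ −a·h(t)² + b for every t ∈ [0, T). Then for every t ∈ [0, T), h(t) ≤ max (h(0)) (Real.sqrt (b/a)); that is, h(t) ≤ max{h(0), √(b/a)}. -/
/-! Above `√(b/a)` the right-hand side `-a h² + b` is negative, so `max (h 0) √(b/a)` is a
barrier that `h` cannot cross. -/

open Real Set

theorem le_of_deriv_right_nonpos_of_lt {f f' : ℝ → ℝ} {a b M : ℝ}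
    (hf : ContinuousOn f (Icc a b)) (hf' : ∀ x ∈ Ico a b, HasDerivWithinAt f (f' x) (Ici x) x)
    (ha : f a ≤ M) (hM : ∀ x ∈ Ico a b, M < f x → f' x ≤ 0) :
    ∀ ⦃x⦄, x ∈ Icc a b → f x ≤ M := by
  intro x hx
  have hxa : 0 < 1 + (x - a) := by linarith [hx.1]
  -- The fence `M + ε (1 + (y - a))` lies strictly above `M`, so wherever `f` touches it `f' ≤ 0 < ε`.
  have fenced : ∀ ε > 0, f x ≤ M + ε * (1 + (x - a)) := fun ε hε =>
    image_le_of_deriv_right_lt_deriv_boundary' hf hf'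
      (B := fun y => M + ε * (1 + (y - a))) (B' := fun _ => ε)
      (by simp only [sub_self]; linarith) (by fun_prop)
      (fun y _ => ((((hasDerivAt_id y).sub_const a).const_add 1).const_mul ε
        |>.const_add M).hasDerivWithinAt.congr_deriv (by ring))
      (fun y hy hfy => (hM y hy (by nlinarith [hy.1])).trans_lt hε) hx
  refine le_of_forall_pos_le_add fun δ hδ => ?_
  simpa [div_mul_cancel₀ _ hxa.ne'] using fenced (δ / (1 + (x - a))) (by positivity)

theorem lt_mul_sq_of_sqrt_div_lt {a b y : ℝ} (ha : 0 < a) (hy : √(b / a) < y) : b < a * y ^ 2 := by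
  have hy₀ : 0 < y := (sqrt_nonneg _).trans_lt hy
  rw [sqrt_lt' hy₀, div_lt_iff₀ ha] at hy
  linarith

theorem ode_comparison_bounded_general (a b T : ℝ) (ha : 0 < a)
    (h : ℝ → ℝ)
    (hdiff : ∀ t ∈ Set.Ico (0 : ℝ) T, DifferentiableAt ℝ h t)
    (hineq : ∀ t ∈ Set.Ico (0 : ℝ) T, deriv h t ≤ -a * (h t) ^ 2 + b) :
    ∀ t ∈ Set.Ico (0 : ℝ) T, h t ≤ max (h 0) (Real.sqrt (b / a)) := by
  intro t ht
  have hsub : Icc 0 t ⊆ Ico 0 T := Icc_subset_Ico_right ht.2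
  refine le_of_deriv_right_nonpos_of_lt (f' := deriv h)
    (fun s hs => (hdiff s (hsub hs)).continuousAt.continuousWithinAt)
    (fun s hs => (hdiff s (hsub (Ico_subset_Icc_self hs))).hasDerivAt.hasDerivWithinAt)
    (le_max_left _ _) (fun s hs hlt => ?_) ⟨ht.1, le_rfl⟩
  have hb_lt : b < a * h s ^ 2 := lt_mul_sq_of_sqrt_div_lt ha ((le_max_right _ _).trans_lt hlt)
  linarith [hineq s (hsub (Ico_subset_Icc_self hs))]

/-- ODE comparison for `h' ≤ −a h² + b`: such a differentiable function on `[0, T)`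
stays below `max {h(0), √(b/a)}`. -/
theorem ode_comparison_bounded (a b T : ℝ) (ha : 0 < a) (hb : 0 < b) (hT : 0 < T)
    (h : ℝ → ℝ)
    (hdiff : ∀ t ∈ Set.Ico (0 : ℝ) T, DifferentiableAt ℝ h t)
    (hineq : ∀ t ∈ Set.Ico (0 : ℝ) T, deriv h t ≤ -a * (h t) ^ 2 + b) :
    ∀ t ∈ Set.Ico (0 : ℝ) T, h t ≤ max (h 0) (Real.sqrt (b / a)) :=
  ode_comparison_bounded_general a b T ha h hdiff hineq
end

section
/- Let 𝕆 = ℝ × ℝ⁷ with the octonion product ∘ defined from the standard G₂ 3-form φ₀, and for X = (x, ξ) ∈ 𝕆 let X̄ = (x, −ξ) denote the conjugate. Let V ∈ 𝕆 be a unit octonion, i.e. ‖V‖ = 1, so that V⁻¹ = V̄. Then for all A, B ∈ 𝕆: (A ∘ V) ∘ (V̄ ∘ B) = A ∘ B + [A, B, V] ∘ V̄, where [A, B, V] = A ∘ (B ∘ V) − (A ∘ B) ∘ V is the associator. -/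
/-! The condition `⟪u ×₀ v, w⟫ = φ₀(u, v, w)` pins the cross product down to an explicit bilinear
map. With it, `(X ∘ V) ∘ V̄ = ‖V‖² X`, so for unit `V` the right-hand side collapses to
`(A ∘ (B ∘ V)) ∘ V̄`. The remaining identity `(A ∘ V) ∘ (V̄ ∘ B) = (A ∘ (B ∘ V)) ∘ V̄` is quadratic
in `V` on both sides, hence holds for every `V` once it holds on the unit sphere; it is a Moufang-type
identity of the octonions, checked coordinatewise. -/

open scoped RealInnerProductSpace

/-- The elementary alternating 3-form `eⁱ ∧ eʲ ∧ eᵏ` on `ℝ⁷`. -/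
noncomputable def e3 (i j k : Fin 7) (u v w : EuclideanSpace ℝ (Fin 7)) : ℝ :=
  Matrix.det !![u i, u j, u k; v i, v j, v k; w i, w j, w k]

/-- The standard G₂ 3-form on `ℝ⁷`:
`φ₀ = e¹²³ + e¹⁴⁵ + e¹⁶⁷ + e²⁴⁶ − e²⁵⁷ − e³⁴⁷ − e³⁵⁶` (indices shifted to start at 0). -/
noncomputable def phi0 (u v w : EuclideanSpace ℝ (Fin 7)) : ℝ :=
  e3 0 1 2 u v w + e3 0 3 4 u v w + e3 0 5 6 u v w + e3 1 3 5 u v w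
    - e3 1 4 6 u v w - e3 2 3 6 u v w - e3 2 4 5 u v w

/-- The octonion product on `𝕆 = ℝ × ℝ⁷`:
`(a, α) ∘ (b, β) = (ab − ⟨α, β⟩, aβ + bα + α ×₀ β)`. -/
noncomputable def omul
    (cross : EuclideanSpace ℝ (Fin 7) → EuclideanSpace ℝ (Fin 7) →
      EuclideanSpace ℝ (Fin 7))
    (A B : ℝ × EuclideanSpace ℝ (Fin 7)) : ℝ × EuclideanSpace ℝ (Fin 7) :=
  (A.1 * B.1 - ⟪A.2, B.2⟫, A.1 • B.2 + B.1 • A.2 + cross A.2 B.2)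

/-- Octonion conjugation: `(x, ξ) ↦ (x, −ξ)`. -/
def oconj (X : ℝ × EuclideanSpace ℝ (Fin 7)) : ℝ × EuclideanSpace ℝ (Fin 7) :=
  (X.1, -X.2)

def g2Cross (u v : EuclideanSpace ℝ (Fin 7)) : EuclideanSpace ℝ (Fin 7) :=
  !₂[u 1 * v 2 - u 2 * v 1 + u 3 * v 4 - u 4 * v 3 + u 5 * v 6 - u 6 * v 5,
    u 2 * v 0 - u 0 * v 2 + u 3 * v 5 - u 5 * v 3 + u 6 * v 4 - u 4 * v 6,
    u 0 * v 1 - u 1 * v 0 + u 5 * v 4 - u 4 * v 5 + u 6 * v 3 - u 3 * v 6,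
    u 4 * v 0 - u 0 * v 4 + u 5 * v 1 - u 1 * v 5 + u 2 * v 6 - u 6 * v 2,
    u 0 * v 3 - u 3 * v 0 + u 1 * v 6 - u 6 * v 1 + u 2 * v 5 - u 5 * v 2,
    u 6 * v 0 - u 0 * v 6 + u 1 * v 3 - u 3 * v 1 + u 4 * v 2 - u 2 * v 4,
    u 0 * v 5 - u 5 * v 0 + u 4 * v 1 - u 1 * v 4 + u 3 * v 2 - u 2 * v 3]

theorem inner_g2Cross (u v w : EuclideanSpace ℝ (Fin 7)) : ⟪g2Cross u v, w⟫ = phi0 u v w := by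
  simp only [g2Cross, phi0, e3, Matrix.det_fin_three, PiLp.inner_apply, RCLike.inner_apply,
    conj_trivial, Fin.sum_univ_seven, Matrix.of_apply, Matrix.cons_val, Fin.isValue]
  ring

theorem eq_g2Cross_of_inner_eq_phi0
    {cross : EuclideanSpace ℝ (Fin 7) → EuclideanSpace ℝ (Fin 7) → EuclideanSpace ℝ (Fin 7)}
    (hcross : ∀ u v w, ⟪cross u v, w⟫ = phi0 u v w) : cross = g2Cross := by
  ext u v : 2
  exact ext_inner_right ℝ fun w => by rw [hcross, inner_g2Cross]

theorem g2Cross_sub_left (x y z : EuclideanSpace ℝ (Fin 7)) :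
    g2Cross (x - y) z = g2Cross x z - g2Cross y z := by
  ext i
  fin_cases i <;> simp only [g2Cross, PiLp.sub_apply, Matrix.cons_val, Fin.isValue, Fin.reduceFinMk] <;> ring

theorem omul_sub_left (X Y Z : ℝ × EuclideanSpace ℝ (Fin 7)) :
    omul g2Cross (X - Y) Z = omul g2Cross X Z - omul g2Cross Y Z := by
  ext1
  · simp only [omul, Prod.fst_sub, Prod.snd_sub, inner_sub_left]; ring
  · simp only [omul, Prod.fst_sub, Prod.snd_sub, g2Cross_sub_left, sub_smul, smul_sub]; abel

theorem omul_omul_oconj (X V : ℝ × EuclideanSpace ℝ (Fin 7)) :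
    omul g2Cross (omul g2Cross X V) (oconj V) = (V.1 ^ 2 + ‖V.2‖ ^ 2) • X := by
  rw [EuclideanSpace.real_norm_sq_eq]
  ext i
  · simp only [omul, oconj, g2Cross, PiLp.inner_apply, RCLike.inner_apply, conj_trivial,
      Fin.sum_univ_seven, PiLp.add_apply, PiLp.neg_apply, PiLp.smul_apply, smul_eq_mul,
      Matrix.cons_val, Fin.isValue, Prod.smul_fst]
    ring
  · fin_cases i <;> simp only [omul, oconj, g2Cross, PiLp.inner_apply, RCLike.inner_apply,
      conj_trivial, Fin.sum_univ_seven, PiLp.add_apply, PiLp.neg_apply, PiLp.smul_apply,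
      smul_eq_mul, Matrix.cons_val, Fin.isValue, Fin.reduceFinMk, Prod.smul_snd] <;> ring

set_option maxHeartbeats 1000000 in
theorem omul_omul_oconj_omul (A B V : ℝ × EuclideanSpace ℝ (Fin 7)) :
    omul g2Cross (omul g2Cross A V) (omul g2Cross (oconj V) B) =
      omul g2Cross (omul g2Cross A (omul g2Cross B V)) (oconj V) := by
  ext i
  · simp only [omul, oconj, g2Cross, PiLp.inner_apply, RCLike.inner_apply, conj_trivial,
      Fin.sum_univ_seven, PiLp.add_apply, PiLp.neg_apply, PiLp.smul_apply, smul_eq_mul,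
      Matrix.cons_val, Fin.isValue]
    ring
  · fin_cases i <;> simp only [omul, oconj, g2Cross, PiLp.inner_apply, RCLike.inner_apply,
      conj_trivial, Fin.sum_univ_seven, PiLp.add_apply, PiLp.neg_apply, PiLp.smul_apply,
      smul_eq_mul, Matrix.cons_val, Fin.isValue, Fin.reduceFinMk] <;> ring

/-- For a unit octonion `V` (so that `V⁻¹ = V̄`), the modified product satisfies
`(A∘V)∘(V̄∘B) = A∘B + [A,B,V]∘V̄`, where `[A,B,V] = A∘(B∘V) − (A∘B)∘V` is the
associator; here `∘` is the octonion product on `𝕆 = ℝ × ℝ⁷` defined via the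
cross product of the standard G₂ 3-form `φ₀`. -/
theorem modified_product_eq_assoc
    (cross : EuclideanSpace ℝ (Fin 7) → EuclideanSpace ℝ (Fin 7) →
      EuclideanSpace ℝ (Fin 7))
    (hcross : ∀ u v w : EuclideanSpace ℝ (Fin 7), ⟪cross u v, w⟫ = phi0 u v w)
    (V : ℝ × EuclideanSpace ℝ (Fin 7)) (hV : V.1 ^ 2 + ‖V.2‖ ^ 2 = 1)
    (A B : ℝ × EuclideanSpace ℝ (Fin 7)) :
    omul cross (omul cross A V) (omul cross (oconj V) B) =
      omul cross A B +
        omul cross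
          (omul cross A (omul cross B V) - omul cross (omul cross A B) V)
          (oconj V) := by
  obtain rfl := eq_g2Cross_of_inner_eq_phi0 hcross
  rw [omul_sub_left, omul_omul_oconj, hV, one_smul, omul_omul_oconj_omul]
  abel
end

section
/- Let 𝕆 = ℝ × ℝ⁷ with the octonion product ∘ defined from the standard G₂ 3-form φ₀, and let V = (v₀, v) ∈ 𝕆 be a unit octonion (v₀² + ‖v‖² = 1) with conjugate V̄ = (v₀, −v). Regard vectors α ∈ ℝ⁷ as imaginary octonions (0, α). Define the 3-form φ_V on ℝ⁷ by φ_V(α, β, γ) = ⟨Im ((α ∘ V) ∘ (V̄ ∘ β)), γ⟩. Then φ_V = (v₀² − ‖v‖²)·φ₀ − 2v₀·(v ⌟ ψ₀) + 2·v♭ ∧ (v ⌟ φ₀), where v♭ is the 1-form ⟨v, ·⟩, v⌟ denotes contraction of v into the first slot, and ψ₀ is the standard 4-form on ℝ⁷. -/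
open scoped RealInnerProductSpace

/-- The elementary alternating 4-form `eⁱ ∧ eʲ ∧ eᵏ ∧ eˡ` on `ℝ⁷`. -/
noncomputable def e4 (i j k l : Fin 7) (u v w x : EuclideanSpace ℝ (Fin 7)) : ℝ :=
  Matrix.det !![u i, u j, u k, u l; v i, v j, v k, v l;
                w i, w j, w k, w l; x i, x j, x k, x l]

/-- The standard 4-form `ψ₀ = ⋆φ₀` on `ℝ⁷`:
`ψ₀ = e⁴⁵⁶⁷ + e²³⁶⁷ + e²³⁴⁵ + e¹³⁵⁷ − e¹³⁴⁶ − e¹²⁵⁶ − e¹²⁴⁷`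
(indices shifted to start at 0). -/
noncomputable def psi0 (u v w x : EuclideanSpace ℝ (Fin 7)) : ℝ :=
  e4 3 4 5 6 u v w x + e4 1 2 5 6 u v w x + e4 1 2 3 4 u v w x + e4 0 2 4 6 u v w x
    - e4 0 2 3 5 u v w x - e4 0 1 4 5 u v w x - e4 0 1 3 6 u v w x

/-!
Writing out the two products, `φ_V(α, β, γ)` is `v₀² φ₀(α, β, γ)`, plus `v₀` times
`φ₀(α ×₀ v, β, γ)` and `φ₀(α, v ×₀ β, γ)`, plus `φ₀(α ×₀ v, v ×₀ β, γ)`, plus products of inner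
products with `φ₀`. The terms linear in `v₀` are evaluated by the `G₂` identity
`φ₀(u ×₀ w, x, y) = ⟨u,x⟩⟨w,y⟩ − ⟨u,y⟩⟨w,x⟩ + ψ₀(u, w, x, y)`, which is where `ψ₀` comes from,
and the quadratic one by the analogous identity for two cross products sharing the factor `v`.
Since `φ₀` determines `×₀`, both are polynomial identities in coordinates.
-/

local notation "ℝ⁷" => EuclideanSpace ℝ (Fin 7)

lemma e3_apply (i j k : Fin 7) (u v w : ℝ⁷) :
    e3 i j k u v w = u i * (v j * w k - v k * w j) - u j * (v i * w k - v k * w i)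
      + u k * (v i * w j - v j * w i) := by
  simp only [e3, Matrix.det_fin_three, Matrix.of_apply, Matrix.cons_val', Matrix.cons_val_zero,
    Matrix.cons_val_fin_one, Matrix.cons_val_one, Matrix.cons_val]
  ring

lemma e4_apply (i j k l : Fin 7) (u v w x : ℝ⁷) :
    e4 i j k l u v w x = u i * e3 j k l v w x - u j * e3 i k l v w x
      + u k * e3 i j l v w x - u l * e3 i j k v w x := by
  rw [e4, Matrix.det_succ_row_zero, Fin.sum_univ_four]
  simp only [Nat.succ_eq_add_one, Nat.reduceAdd, Fin.isValue, Fin.coe_ofNat_eq_mod, Nat.zero_mod,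
    pow_zero, Matrix.of_apply, Matrix.cons_val', Matrix.cons_val_zero, Matrix.cons_val_fin_one,
    one_mul, Fin.succAbove_zero, Matrix.det_fin_three, Matrix.submatrix_apply,
    Fin.succ_zero_eq_one, Matrix.cons_val_one, Fin.succ_one_eq_two, Matrix.cons_val,
    Fin.reduceSucc, Nat.one_mod, pow_one, neg_mul, Fin.succAbove, Fin.castSucc_zero, zero_lt_one,
    ↓reduceIte, Fin.castSucc_one, lt_self_iff_false, Fin.reduceCastSucc, Fin.lt_one_iff,
    Fin.reduceEq, Nat.reduceMod, even_two, Even.neg_pow, one_pow, Fin.reduceLT, Nat.mod_succ, e3]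
  ring

/-- The cross product `×₀`: its `i`-th component is `φ₀(u, w, eᵢ)`. -/
noncomputable def cross0 (u w : ℝ⁷) : ℝ⁷ :=
  !₂[(u 1 * w 2 - u 2 * w 1) + (u 3 * w 4 - u 4 * w 3) + (u 5 * w 6 - u 6 * w 5),
    -(u 0 * w 2 - u 2 * w 0) + (u 3 * w 5 - u 5 * w 3) - (u 4 * w 6 - u 6 * w 4),
    (u 0 * w 1 - u 1 * w 0) - (u 3 * w 6 - u 6 * w 3) - (u 4 * w 5 - u 5 * w 4),
    -(u 0 * w 4 - u 4 * w 0) - (u 1 * w 5 - u 5 * w 1) + (u 2 * w 6 - u 6 * w 2),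
    (u 0 * w 3 - u 3 * w 0) + (u 1 * w 6 - u 6 * w 1) + (u 2 * w 5 - u 5 * w 2),
    -(u 0 * w 6 - u 6 * w 0) + (u 1 * w 3 - u 3 * w 1) - (u 2 * w 4 - u 4 * w 2),
    (u 0 * w 5 - u 5 * w 0) - (u 1 * w 4 - u 4 * w 1) - (u 2 * w 3 - u 3 * w 2)]

lemma inner_cross0 (u w x : ℝ⁷) : ⟪cross0 u w, x⟫ = phi0 u w x := by
  simp only [cross0, phi0, e3_apply, PiLp.inner_apply, RCLike.inner_apply, conj_trivial,
    Fin.sum_univ_seven, Matrix.cons_val_zero, Matrix.cons_val_one, Matrix.cons_val]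
  ring

lemma cross_eq_cross0 {cross : ℝ⁷ → ℝ⁷ → ℝ⁷}
    (hcross : ∀ u w x : ℝ⁷, ⟪cross u w, x⟫ = phi0 u w x) : cross = cross0 :=
  funext₂ fun u w ↦ ext_inner_right ℝ fun x ↦ (hcross u w x).trans (inner_cross0 u w x).symm

section Multilinear

variable (u w x y : ℝ⁷) (a : ℝ)

lemma phi0_add_left : phi0 (u + w) x y = phi0 u x y + phi0 w x y := by
  simp only [phi0, e3_apply, PiLp.add_apply]; ring

lemma phi0_add_middle : phi0 u (w + x) y = phi0 u w y + phi0 u x y := by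
  simp only [phi0, e3_apply, PiLp.add_apply]; ring

lemma phi0_smul_left : phi0 (a • u) w x = a * phi0 u w x := by
  simp only [phi0, e3_apply, PiLp.smul_apply, smul_eq_mul]; ring

lemma phi0_smul_middle : phi0 u (a • w) x = a * phi0 u w x := by
  simp only [phi0, e3_apply, PiLp.smul_apply, smul_eq_mul]; ring

lemma phi0_neg_left : phi0 (-u) w x = -phi0 u w x := by
  simp only [phi0, e3_apply, PiLp.neg_apply]; ring

lemma phi0_neg_middle : phi0 u (-w) x = -phi0 u w x := by
  simp only [phi0, e3_apply, PiLp.neg_apply]; ring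

lemma phi0_swap_left : phi0 u w x = -phi0 w u x := by
  simp only [phi0, e3_apply]; ring

lemma psi0_swap_left : psi0 u w x y = -psi0 w u x y := by
  simp only [psi0, e4_apply, e3_apply]; ring

lemma psi0_swap_middle : psi0 u w x y = -psi0 u x w y := by
  simp only [psi0, e4_apply, e3_apply]; ring

lemma cross0_neg_left : cross0 (-u) w = -cross0 u w :=
  ext_inner_right ℝ fun x ↦ by rw [inner_cross0, inner_neg_left, inner_cross0, phi0_neg_left]

end Multilinear

lemma phi0_cross0_left (u w x y : ℝ⁷) :
    phi0 (cross0 u w) x y = ⟪u, x⟫ * ⟪w, y⟫ - ⟪u, y⟫ * ⟪w, x⟫ + psi0 u w x y := by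
  simp only [cross0, phi0, psi0, e4_apply, e3_apply, PiLp.inner_apply, RCLike.inner_apply,
    conj_trivial, Fin.sum_univ_seven, Matrix.cons_val_zero, Matrix.cons_val_one, Matrix.cons_val]
  ring

lemma phi0_cross0_cross0 (u v w x : ℝ⁷) :
    phi0 (cross0 u v) (cross0 v w) x = ‖v‖ ^ 2 * phi0 u w x - ⟪v, u⟫ * phi0 v w x
      + ⟪v, w⟫ * phi0 v u x - 2 * ⟪v, x⟫ * phi0 v u w := by
  rw [← real_inner_self_eq_norm_sq]
  simp only [cross0, phi0, e3_apply, PiLp.inner_apply, RCLike.inner_apply,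
    conj_trivial, Fin.sum_univ_seven, Matrix.cons_val_zero, Matrix.cons_val_one, Matrix.cons_val]
  ring

theorem sigmaV_formula_general
    (cross : EuclideanSpace ℝ (Fin 7) → EuclideanSpace ℝ (Fin 7) →
      EuclideanSpace ℝ (Fin 7))
    (hcross : ∀ u v w : EuclideanSpace ℝ (Fin 7), ⟪cross u v, w⟫ = phi0 u v w)
    (v₀ : ℝ) (v : EuclideanSpace ℝ (Fin 7))
    (α β γ : EuclideanSpace ℝ (Fin 7)) :
    ⟪(omul cross (omul cross ((0 : ℝ), α) (v₀, v))
        (omul cross (oconj (v₀, v)) ((0 : ℝ), β))).2, γ⟫ =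
      (v₀ ^ 2 - ‖v‖ ^ 2) * phi0 α β γ - 2 * v₀ * psi0 v α β γ +
        2 * (⟪v, α⟫ * phi0 v β γ - ⟪v, β⟫ * phi0 v α γ + ⟪v, γ⟫ * phi0 v α β) := by
  obtain rfl := cross_eq_cross0 hcross
  simp only [omul, oconj, zero_mul, zero_smul, zero_add, add_zero, zero_sub, inner_neg_left,
    cross0_neg_left, inner_add_left, real_inner_smul_left, inner_cross0, phi0_add_left,
    phi0_add_middle, phi0_smul_left, phi0_smul_middle, phi0_neg_middle]
  rw [phi0_cross0_cross0, phi0_swap_left α (cross0 v β), phi0_cross0_left, phi0_cross0_left,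
    phi0_swap_left α v, psi0_swap_left α, psi0_swap_middle v β, real_inner_comm α v,
    real_inner_comm α β]
  ring

/-- For a unit octonion `V = (v₀, v)`, the 3-form
`φ_V(α,β,γ) = ⟨Im((α∘V)∘(V̄∘β)), γ⟩` induced by the modified octonion product
equals `(v₀² − ‖v‖²)φ₀ − 2v₀ (v⌟ψ₀) + 2 v♭ ∧ (v⌟φ₀)`; the wedge of the 1-form
`v♭` with the 2-form `v⌟φ₀` is evaluated as
`(v♭∧(v⌟φ₀))(α,β,γ) = ⟨v,α⟩φ₀(v,β,γ) − ⟨v,β⟩φ₀(v,α,γ) + ⟨v,γ⟩φ₀(v,α,β)`. -/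
theorem sigmaV_formula
    (cross : EuclideanSpace ℝ (Fin 7) → EuclideanSpace ℝ (Fin 7) →
      EuclideanSpace ℝ (Fin 7))
    (hcross : ∀ u v w : EuclideanSpace ℝ (Fin 7), ⟪cross u v, w⟫ = phi0 u v w)
    (v₀ : ℝ) (v : EuclideanSpace ℝ (Fin 7)) (hV : v₀ ^ 2 + ‖v‖ ^ 2 = 1)
    (α β γ : EuclideanSpace ℝ (Fin 7)) :
    ⟪(omul cross (omul cross ((0 : ℝ), α) (v₀, v))
        (omul cross (oconj (v₀, v)) ((0 : ℝ), β))).2, γ⟫ =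
      (v₀ ^ 2 - ‖v‖ ^ 2) * phi0 α β γ - 2 * v₀ * psi0 v α β γ +
        2 * (⟪v, α⟫ * phi0 v β γ - ⟪v, β⟫ * phi0 v α γ + ⟪v, γ⟫ * phi0 v α β) :=
  sigmaV_formula_general cross hcross v₀ v α β γ
end
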